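/- arXiv:1805.01465 — 2 statements merged into one kernel-verified Lean document; each statement's English description precedes it below -/
import Mathlib

section
/- There exists a constant C ∈ (1,∞) such that for all m, n, k ∈ ℕ: P(τ_k^{(m)} ≥ n) ≤ ( min( C·k·m/(n·(log m + 1)), 1) )^{n/m}, where the exponent n/m is a real exponent and P(τ_k^{(m)} ≥ n) := Σ_{j≥n} P(τ_k^{(m)} = j). -/
open Filter MeasureTheory Real
open scoped Classical Topology

/-- `R_N := Σ_{n=1}^N r(n)`. -/
noncomputable def RR (r : ℕ → ℝ) (N : ℕ) : ℝ := ∑ n ∈ Finset.Icc 1 N, r n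

/-- `P(τ_k^{(N)} = n)` for the renewal process with increment law `r(·)/R_N` on `{1,…,N}`:
for `k ≥ 1` it is `R_N^{-k} Σ_{(n_1,…,n_k) ∈ {1,…,N}^k, n_1+⋯+n_k=n} Π_i r(n_i)`,
and for `k = 0` it is `1_{n=0}`. -/
noncomputable def tauP (r : ℕ → ℝ) (N k n : ℕ) : ℝ :=
  if k = 0 then (if n = 0 then 1 else 0)
  else (RR r N)⁻¹ ^ k *
    ∑ f ∈ (Fintype.piFinset fun _ : Fin k => Finset.Icc 1 N).filter
        (fun f => ∑ i, f i = n),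
      ∏ i, r (f i)

/-- `P(τ_k^{(m)} ≥ n) := Σ_{j ≥ n} P(τ_k^{(m)} = j)`. -/
noncomputable def tauTail (r : ℕ → ℝ) (m k n : ℕ) : ℝ :=
  ∑' j : ℕ, if n ≤ j then tauP r m k j else 0

/-!
Chernoff's method with the tilt `e^{t/m}`: by convexity `e^{tj/m} ≤ 1 + (e^t - 1) j/m` on
`0 ≤ j ≤ m`, so `E[e^{t T/m}] ≤ exp (μ (e^t - 1))` with `μ = E[T]/m`, and
`P(τ_k ≥ n) ≤ exp (k μ (e^t - 1) - t n/m)`. As `j r(j) → a > 0`, the products `j r(j)`,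
`j ≥ 1`, lie in some `[δ, B]` with `δ > 0`, so `R_m ≥ δ (1 + ⋯ + 1/m) ≥ (δ/2) (log m + 1)` and
`μ ≤ 2B / (δ (log m + 1))`. Choosing `e^t = (n/m) / (k μ)` gives the Poisson-type bound
`(e k μ m / n)^{n/m}`.
-/

namespace FukNagaev

variable {r : ℕ → ℝ} {N k n : ℕ}

lemma tauP_eq_inv_pow_mul_sum :
    tauP r N k n = (RR r N)⁻¹ ^ k *
      ∑ f ∈ (Fintype.piFinset fun _ : Fin k => Finset.Icc 1 N).filter (fun f => ∑ i, f i = n),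
        ∏ i, r (f i) := by
  rcases Nat.eq_zero_or_pos k with rfl | hk
  · by_cases hn : n = 0 <;> simp [tauP, hn, eq_comm]
  · simp [tauP, hk.ne']

lemma pos_of_RR_pos (hR : 0 < RR r N) : 0 < N := by
  rcases Nat.eq_zero_or_pos N with rfl | h
  · simp [RR] at hR
  · exact h

lemma tauP_nonneg (hr : ∀ n, 0 ≤ r n) : 0 ≤ tauP r N k n := by
  rw [tauP_eq_inv_pow_mul_sum]
  have hR : 0 ≤ RR r N := Finset.sum_nonneg fun i _ => hr i
  exact mul_nonneg (by positivity)
    (Finset.sum_nonneg fun f _ => Finset.prod_nonneg fun i _ => hr _)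

lemma sum_le_mul_of_mem_piFinset {f : Fin k → ℕ}
    (hf : f ∈ Fintype.piFinset fun _ : Fin k => Finset.Icc 1 N) : ∑ i, f i ≤ k * N := by
  simpa using Finset.sum_le_sum fun i (_ : i ∈ Finset.univ) =>
    (Finset.mem_Icc.1 (Fintype.mem_piFinset.1 hf i)).2

lemma tauP_eq_zero_of_mul_lt (h : k * N < n) : tauP r N k n = 0 := by
  rw [tauP_eq_inv_pow_mul_sum, Finset.filter_false_of_mem, Finset.sum_empty, mul_zero]
  intro f hf hsum
  have := sum_le_mul_of_mem_piFinset hf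
  omega

lemma sum_tauP_mul_pow (y : ℝ) :
    ∑ j ∈ Finset.range (k * N + 1), tauP r N k j * y ^ j
      = ((RR r N)⁻¹ * ∑ j ∈ Finset.Icc 1 N, r j * y ^ j) ^ k := by
  have hmaps : ∀ f ∈ Fintype.piFinset fun _ : Fin k => Finset.Icc 1 N,
      ∑ i, f i ∈ Finset.range (k * N + 1) := fun f hf =>
    Finset.mem_range.2 (Nat.lt_succ_of_le (sum_le_mul_of_mem_piFinset hf))
  simp_rw [tauP_eq_inv_pow_mul_sum, mul_assoc, ← Finset.mul_sum, mul_pow, Finset.sum_mul]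
  congr 1
  rw [← Fin.prod_const, Finset.prod_univ_sum,
    ← Finset.sum_fiberwise_of_maps_to hmaps (fun f => ∏ i, r (f i) * y ^ f i)]
  refine Finset.sum_congr rfl fun j _ => Finset.sum_congr rfl fun f hf => ?_
  rw [Finset.prod_mul_distrib, Finset.prod_pow_eq_pow_sum, (Finset.mem_filter.1 hf).2]

lemma tauTail_eq_sum_range :
    tauTail r N k n = ∑ j ∈ Finset.range (k * N + 1), if n ≤ j then tauP r N k j else 0 :=
  tsum_eq_sum fun j hj => by
    rw [tauP_eq_zero_of_mul_lt (by simpa [Nat.lt_succ_iff] using hj), ite_self]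

lemma tauTail_le_inv_pow_mul (hr : ∀ n, 0 ≤ r n) {y : ℝ} (hy : 1 ≤ y) :
    tauTail r N k n
      ≤ (y ^ n)⁻¹ * ((RR r N)⁻¹ * ∑ j ∈ Finset.Icc 1 N, r j * y ^ j) ^ k := by
  rw [tauTail_eq_sum_range, ← sum_tauP_mul_pow, Finset.mul_sum]
  refine Finset.sum_le_sum fun j _ => ?_
  have hP : 0 ≤ tauP r N k j := tauP_nonneg hr
  have hyn : 0 < y ^ n := by positivity
  split_ifs with hnj
  · have hyjn : 1 ≤ y ^ j / y ^ n := (one_le_div hyn).2 (pow_le_pow_right₀ hy hnj)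
    calc tauP r N k j = tauP r N k j * 1 := (mul_one _).symm
      _ ≤ tauP r N k j * (y ^ j / y ^ n) := mul_le_mul_of_nonneg_left hyjn hP
      _ = (y ^ n)⁻¹ * (tauP r N k j * y ^ j) := by ring
  · positivity

lemma exp_mul_le_one_add_mul (t : ℝ) {x : ℝ} (hx₀ : 0 ≤ x) (hx₁ : x ≤ 1) :
    Real.exp (t * x) ≤ 1 + (Real.exp t - 1) * x := by
  have h := convexOn_exp.2 (Set.mem_univ 0) (Set.mem_univ t) (sub_nonneg.2 hx₁) hx₀ (by ring)
  simp only [smul_eq_mul, mul_zero, zero_add, Real.exp_zero, mul_one] at h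
  rw [mul_comm x t] at h
  linarith

-- `hμ` says `E[T_1^{(N)}] ≤ μ N`; the left side is `E[exp (t T_1^{(N)} / N)]`.
lemma inv_RR_mul_sum_exp_le (hr : ∀ n, 0 ≤ r n) (hR : 0 < RR r N) {μ t : ℝ}
    (hμ : ∑ j ∈ Finset.Icc 1 N, r j * j ≤ μ * N * RR r N) (ht : 0 ≤ t) :
    (RR r N)⁻¹ * ∑ j ∈ Finset.Icc 1 N, r j * Real.exp (t / N) ^ j
      ≤ Real.exp (μ * (Real.exp t - 1)) := by
  have hN : (0 : ℝ) < N := by exact_mod_cast pos_of_RR_pos hR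
  have het : 0 ≤ Real.exp t - 1 := by linarith [Real.one_le_exp ht]
  have hterm : ∀ j ∈ Finset.Icc 1 N,
      r j * Real.exp (t / N) ^ j ≤ r j + (Real.exp t - 1) / N * (r j * j) := by
    intro j hj
    have hjN : (j : ℝ) / N ≤ 1 := (div_le_one hN).2 (by exact_mod_cast (Finset.mem_Icc.1 hj).2)
    have := exp_mul_le_one_add_mul t (by positivity) hjN
    calc r j * Real.exp (t / N) ^ j = r j * Real.exp (t * (j / N)) := by
          rw [← Real.exp_nat_mul, mul_div_left_comm]
      _ ≤ r j * (1 + (Real.exp t - 1) * (j / N)) := mul_le_mul_of_nonneg_left this (hr j)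
      _ = r j + (Real.exp t - 1) / N * (r j * j) := by ring
  calc (RR r N)⁻¹ * ∑ j ∈ Finset.Icc 1 N, r j * Real.exp (t / N) ^ j
      ≤ (RR r N)⁻¹ * (RR r N + (Real.exp t - 1) / N * ∑ j ∈ Finset.Icc 1 N, r j * j) := by
        refine mul_le_mul_of_nonneg_left ?_ (by positivity)
        rw [RR, Finset.mul_sum, ← Finset.sum_add_distrib]
        exact Finset.sum_le_sum hterm
    _ ≤ (RR r N)⁻¹ * (RR r N + (Real.exp t - 1) / N * (μ * N * RR r N)) := by gcongr
    _ = 1 + μ * (Real.exp t - 1) := by field_simp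
    _ ≤ Real.exp (μ * (Real.exp t - 1)) := by
        linarith [Real.add_one_le_exp (μ * (Real.exp t - 1))]

lemma tauTail_le_exp (hr : ∀ n, 0 ≤ r n) (hR : 0 < RR r N) {μ t : ℝ}
    (hμ : ∑ j ∈ Finset.Icc 1 N, r j * j ≤ μ * N * RR r N) (ht : 0 ≤ t) :
    tauTail r N k n ≤ Real.exp (k * μ * (Real.exp t - 1) - t * (n / N)) := by
  calc tauTail r N k n
      ≤ (Real.exp (t / N) ^ n)⁻¹ *
          ((RR r N)⁻¹ * ∑ j ∈ Finset.Icc 1 N, r j * Real.exp (t / N) ^ j) ^ k :=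
        tauTail_le_inv_pow_mul hr (Real.one_le_exp (by positivity))
    _ ≤ (Real.exp (t / N) ^ n)⁻¹ * Real.exp (μ * (Real.exp t - 1)) ^ k := by
        gcongr
        · exact mul_nonneg (inv_nonneg.2 hR.le)
            (Finset.sum_nonneg fun j _ => mul_nonneg (hr j) (by positivity))
        · exact inv_RR_mul_sum_exp_le hr hR hμ ht
    _ = Real.exp (k * μ * (Real.exp t - 1) - t * (n / N)) := by
        rw [← Real.exp_nat_mul, ← Real.exp_nat_mul, ← Real.exp_neg, ← Real.exp_add]
        ring_nf

lemma exists_nonneg_exp_le_rpow {l ν : ℝ} (hl : 0 < l) (hlν : l ≤ ν) :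
    ∃ t, 0 ≤ t ∧ Real.exp (l * (Real.exp t - 1) - t * ν) ≤ (Real.exp 1 * l / ν) ^ ν := by
  have hν : 0 < ν := hl.trans_le hlν
  refine ⟨Real.log (ν / l), Real.log_nonneg ((one_le_div hl).2 hlν), ?_⟩
  rw [Real.exp_log (by positivity), Real.rpow_def_of_pos (by positivity), Real.exp_le_exp,
    Real.log_div (by positivity) hν.ne', Real.log_mul (by positivity) hl.ne', Real.log_exp,
    Real.log_div hν.ne' hl.ne']
  field_simp
  linarith

lemma tauTail_le_min_rpow (hr : ∀ n, 0 ≤ r n) (hR : 0 < RR r N) {μ : ℝ}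
    (hμ : ∑ j ∈ Finset.Icc 1 N, r j * j ≤ μ * N * RR r N) (hkμ : 0 < k * μ) (hn : 0 < n)
    {x : ℝ} (hx : Real.exp 1 * (k * μ) / (n / N) ≤ x) :
    tauTail r N k n ≤ (min x 1) ^ ((n : ℝ) / N) := by
  have hν : (0 : ℝ) < n / N := by
    have := pos_of_RR_pos hR
    positivity
  rcases le_or_gt 1 x with hx1 | hx1
  · rw [min_eq_right hx1, Real.one_rpow]
    simpa using tauTail_le_exp (k := k) (n := n) hr hR hμ le_rfl
  · rw [min_eq_left hx1.le]
    have hlν : k * μ ≤ n / N := by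
      have : Real.exp 1 * (k * μ) < n / N := (div_lt_one hν).1 (hx.trans_lt hx1)
      nlinarith [Real.add_one_le_exp 1]
    obtain ⟨t, ht, hexp⟩ := exists_nonneg_exp_le_rpow hkμ hlν
    calc tauTail r N k n ≤ Real.exp (k * μ * (Real.exp t - 1) - t * (n / N)) :=
          tauTail_le_exp hr hR hμ ht
      _ ≤ (Real.exp 1 * (k * μ) / (n / N)) ^ ((n : ℝ) / N) := hexp
      _ ≤ x ^ ((n : ℝ) / N) := Real.rpow_le_rpow (by positivity) hx hν.le

lemma exists_pos_le_mul_of_tendsto {a : ℝ} (ha : 0 < a) (hr : ∀ n, 0 < r n)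
    (hra : Tendsto (fun n : ℕ => (n : ℝ) * r n) atTop (𝓝 a)) :
    ∃ δ, 0 < δ ∧ ∀ j : ℕ, 1 ≤ j → δ ≤ j * r j := by
  obtain ⟨D, hD⟩ := (hra.inv₀ ha.ne').bddAbove_range
  have hjr : ∀ j : ℕ, 1 ≤ j → 0 < (j : ℝ) * r j := fun j hj => by
    have : (0 : ℝ) < j := by exact_mod_cast hj
    exact mul_pos this (hr j)
  have hD0 : 0 < D := (inv_pos.2 (hjr 1 le_rfl)).trans_le (hD ⟨1, rfl⟩)
  exact ⟨D⁻¹, inv_pos.2 hD0, fun j hj => (inv_le_comm₀ (hjr j hj) hD0).1 (hD ⟨j, rfl⟩)⟩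

lemma log_add_one_le_two_mul_sum_inv {m : ℕ} (hm : 1 ≤ m) :
    Real.log m + 1 ≤ 2 * ∑ j ∈ Finset.Icc 1 m, (j : ℝ)⁻¹ := by
  have hlog : Real.log m ≤ ∑ j ∈ Finset.Icc 1 m, (j : ℝ)⁻¹ := by
    have := log_add_one_le_harmonic m
    simp only [harmonic_eq_sum_Icc, Rat.cast_sum, Rat.cast_inv, Rat.cast_natCast] at this
    refine le_trans (Real.log_le_log (by exact_mod_cast hm) ?_) this
    push_cast; linarith
  have hone : 1 ≤ ∑ j ∈ Finset.Icc 1 m, (j : ℝ)⁻¹ := by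
    simpa using Finset.single_le_sum (f := fun j : ℕ => (j : ℝ)⁻¹) (fun j _ => by positivity)
      (Finset.mem_Icc.2 ⟨le_rfl, hm⟩)
  linarith

lemma exists_pos_mul_log_add_one_le_RR {a : ℝ} (ha : 0 < a) (hr : ∀ n, 0 < r n)
    (hra : Tendsto (fun n : ℕ => (n : ℝ) * r n) atTop (𝓝 a)) :
    ∃ c, 0 < c ∧ ∀ m : ℕ, 1 ≤ m → c * (Real.log m + 1) ≤ RR r m := by
  obtain ⟨δ, hδ, hδr⟩ := exists_pos_le_mul_of_tendsto ha hr hra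
  refine ⟨δ / 2, by positivity, fun m hm => ?_⟩
  have hterm : ∀ j ∈ Finset.Icc 1 m, δ * (j : ℝ)⁻¹ ≤ r j := fun j hj => by
    have hj := (Finset.mem_Icc.1 hj).1
    have : (0 : ℝ) < j := by exact_mod_cast hj
    rw [← div_eq_mul_inv, div_le_iff₀ this, mul_comm]
    exact hδr j hj
  calc δ / 2 * (Real.log m + 1) ≤ δ * ∑ j ∈ Finset.Icc 1 m, (j : ℝ)⁻¹ := by
        nlinarith [log_add_one_le_two_mul_sum_inv hm]
    _ ≤ RR r m := by rw [Finset.mul_sum]; exact Finset.sum_le_sum hterm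

lemma sum_Icc_mul_le_of_mul_le {B : ℝ} (hB : ∀ j : ℕ, (j : ℝ) * r j ≤ B) :
    ∑ j ∈ Finset.Icc 1 N, r j * j ≤ B * N := by
  simpa [mul_comm] using Finset.sum_le_sum fun j (_ : j ∈ Finset.Icc 1 N) => hB j

end FukNagaev

open FukNagaev

/-- Lemma 6.3 (Fuk–Nagaev type inequality): there is `C ∈ (1,∞)` with
`P(τ_k^{(m)} ≥ n) ≤ (min(Ckm/(n(log m + 1)), 1))^{n/m}` for all `m, n, k ∈ ℕ`. -/
theorem fuk_nagaev_upper_tail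
    (a : ℝ) (ha : 0 < a) (r : ℕ → ℝ) (hr : ∀ n, 0 < r n)
    (hra : Tendsto (fun n : ℕ => (n : ℝ) * r n) atTop (nhds a)) :
    ∃ C : ℝ, 1 < C ∧ ∀ m n k : ℕ, 1 ≤ m → 1 ≤ n → 1 ≤ k →
      tauTail r m k n ≤
        (min (C * k * m / (n * (Real.log m + 1))) 1) ^ ((n : ℝ) / (m : ℝ)) := by
  obtain ⟨B, hB⟩ := hra.bddAbove_range
  replace hB : ∀ j : ℕ, (j : ℝ) * r j ≤ B := fun j => hB ⟨j, rfl⟩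
  have hB0 : 0 < B := (hr 1).trans_le (by simpa using hB 1)
  obtain ⟨c, hc, hcR⟩ := exists_pos_mul_log_add_one_le_RR ha hr hra
  set C := max (Real.exp 1 * B / c) 2
  refine ⟨C, by linarith [le_max_right (Real.exp 1 * B / c) 2], fun m n k hm hn hk => ?_⟩
  have hL : 0 < Real.log m + 1 := by linarith [Real.log_nonneg (Nat.one_le_cast.2 hm)]
  have hR : 0 < RR r m := (mul_pos hc hL).trans_le (hcR m hm)
  have hm0 : (0 : ℝ) < m := by exact_mod_cast hm
  refine tauTail_le_min_rpow (μ := B / (c * (Real.log m + 1))) (fun n => (hr n).le) hR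
    ?_ (by positivity) hn ?_
  · calc ∑ j ∈ Finset.Icc 1 m, r j * j ≤ B * m := sum_Icc_mul_le_of_mul_le hB
      _ = B / (c * (Real.log m + 1)) * m * (c * (Real.log m + 1)) := by field_simp
      _ ≤ B / (c * (Real.log m + 1)) * m * RR r m := by gcongr; exact hcR m hm
  · calc Real.exp 1 * (k * (B / (c * (Real.log m + 1)))) / (n / m)
        = Real.exp 1 * B / c * k * m / (n * (Real.log m + 1)) := by field_simp
      _ ≤ C * k * m / (n * (Real.log m + 1)) := by gcongr; exact le_max_left _ _
end

section
/- There exists a constant c ∈ (0,1) such that for all m, n, k ∈ ℕ: P(τ_k^{(m)} ≤ n) ≤ ( min( n·(log m + 1)/(c·k·m), 1) )^{c·k/(log m + 1)}, where P(τ_k^{(m)} ≤ n) := Σ_{j=0}^n P(τ_k^{(m)} = j). -/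
/-!
Chernoff: for `λ ≥ 0`, `P(τ_k ≤ n) ≤ e^{λn} φ(λ)^k ≤ exp(λn - k(1 - φ(λ)))`, where
`φ(λ) = E e^{-λT}` for one increment `T`. Since `j r(j)` stays between two positive constants
`c₀ ≤ C`, we have `R_m ≤ C (log m + 1)`, while with `λ = 1/J` every increment `j ≥ J` contributes
at least `(1 - e⁻¹) r(j)` to `1 - φ(λ)`, so `1 - φ(1/J) ≥ (1 - e⁻¹) c₀ log((m+1)/J) / R_m`.
Choosing `J = ⌈n (log m + 1) / (2eck)⌉` balances the two terms of the exponent, giving the bound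
with `c = (1 - e⁻¹) c₀ / (8eC)`.
-/

open Filter MeasureTheory Real
open scoped Classical Topology

/-- `P(τ_k^{(m)} ≤ n) := Σ_{j=0}^n P(τ_k^{(m)} = j)`. -/
noncomputable def tauCdf (r : ℕ → ℝ) (m k n : ℕ) : ℝ :=
  ∑ j ∈ Finset.range (n + 1), tauP r m k j

open Finset

lemma log_div_le_sum_Icc_inv {J m : ℕ} (hJ : 1 ≤ J) (hJm : J ≤ m + 1) :
    log ((m + 1) / J) ≤ ∑ j ∈ Icc J m, (j : ℝ)⁻¹ := by
  have hJ0 : (0 : ℝ) < J := by exact_mod_cast hJ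
  calc log ((m + 1) / J) = ∫ x in (J : ℝ)..((m + 1 : ℕ) : ℝ), x⁻¹ := by
        rw [integral_inv]
        · push_cast; rfl
        · rw [Set.uIcc_of_le (by exact_mod_cast hJm)]
          exact fun h => hJ0.not_ge h.1
    _ ≤ ∑ j ∈ Ico J (m + 1), (j : ℝ)⁻¹ :=
        (inv_antitoneOn_Icc_right hJ0).integral_le_sum_Ico hJm
    _ = ∑ j ∈ Icc J m, (j : ℝ)⁻¹ := by rw [Ico_add_one_right_eq_Icc]

lemma sum_Icc_inv_le_one_add_log (m : ℕ) : ∑ j ∈ Icc 1 m, (j : ℝ)⁻¹ ≤ 1 + log m := by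
  simpa [harmonic_eq_sum_Icc] using harmonic_le_one_add_log m

lemma exists_pos_bounds_of_tendsto {s : ℕ → ℝ} {a : ℝ} (hs : ∀ n, 0 < s n) (ha : 0 < a)
    (h : Tendsto s atTop (𝓝 a)) : ∃ c₀ C, 0 < c₀ ∧ ∀ n, c₀ ≤ s n ∧ s n ≤ C := by
  obtain ⟨c₀, hc₀, hlow⟩ := h.isCompact_insert_range.exists_isLeast (Set.insert_nonempty _ _)
  obtain ⟨C, -, hup⟩ := h.isCompact_insert_range.exists_isGreatest (Set.insert_nonempty _ _)
  refine ⟨c₀, C, ?_, fun n => ⟨hlow (by simp), hup (by simp)⟩⟩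
  rcases hc₀ with rfl | ⟨n, rfl⟩
  exacts [ha, hs n]

lemma exists_bounds_natCast_mul_of_tendsto {r : ℕ → ℝ} {a : ℝ} (hr : ∀ n, 0 < r n)
    (ha : 0 < a) (hra : Tendsto (fun n : ℕ => (n : ℝ) * r n) atTop (𝓝 a)) :
    ∃ c₀ C, 0 < c₀ ∧ c₀ ≤ C ∧ ∀ j, 1 ≤ j → c₀ ≤ j * r j ∧ j * r j ≤ C := by
  obtain ⟨c₀, C, hc₀, hs⟩ := exists_pos_bounds_of_tendsto
    (s := fun n => ((n + 1 : ℕ) : ℝ) * r (n + 1)) (fun n => mul_pos (by positivity) (hr _)) ha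
    ((tendsto_add_atTop_iff_nat 1).mpr hra)
  refine ⟨c₀, C, hc₀, (hs 0).1.trans (hs 0).2, fun j hj => ?_⟩
  obtain ⟨i, rfl⟩ := Nat.exists_eq_add_of_le' hj
  exact_mod_cast hs i

lemma sum_range_sum_piFinset_filter_eq_pow {R : Type*} [CommSemiring R] (w : ℕ → R)
    {k N M : ℕ} (hM : k * N ≤ M) :
    ∑ j ∈ range (M + 1), ∑ f ∈ (Fintype.piFinset fun _ : Fin k => Icc 1 N).filter
        (fun f => ∑ i, f i = j), ∏ i, w (f i) = (∑ j ∈ Icc 1 N, w j) ^ k := by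
  rw [sum_fiberwise_of_maps_to, ← Fin.prod_const, prod_univ_sum]
  intro f hf
  have : ∑ i, f i ≤ ∑ _i : Fin k, N :=
    sum_le_sum fun i _ => (mem_Icc.mp (Fintype.mem_piFinset.mp hf i)).2
  simp only [sum_const, card_univ, Fintype.card_fin, smul_eq_mul] at this
  exact mem_range.mpr (by omega)

-- The `k = 0` branch of `tauP` is the general formula evaluated at the empty tuple.
lemma tauP_eq (r : ℕ → ℝ) (N k n : ℕ) :
    tauP r N k n = (RR r N)⁻¹ ^ k *
      ∑ f ∈ (Fintype.piFinset fun _ : Fin k => Icc 1 N).filter (fun f => ∑ i, f i = n),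
        ∏ i, r (f i) := by
  unfold tauP
  split_ifs with hk hn
  · subst hk hn; simp
  · subst hk; simp [Ne.symm hn]
  · rfl

section Renewal

variable {r : ℕ → ℝ} {N k n : ℕ}

lemma tauP_nonneg (hr : ∀ n, 0 ≤ r n) (N k j : ℕ) : 0 ≤ tauP r N k j := by
  rw [tauP_eq]
  exact mul_nonneg (pow_nonneg (inv_nonneg.mpr (sum_nonneg fun j _ => hr j)) k)
    (sum_nonneg fun f _ => prod_nonneg fun i _ => hr (f i))

lemma RR_pos (hr : ∀ n, 0 < r n) (hN : 1 ≤ N) : 0 < RR r N :=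
  sum_pos (fun j _ => hr j) ⟨1, mem_Icc.mpr ⟨le_rfl, hN⟩⟩

noncomputable def incrementMGF (r : ℕ → ℝ) (N : ℕ) (t : ℝ) : ℝ :=
  (RR r N)⁻¹ * ∑ j ∈ Icc 1 N, r j * exp (t * j)

lemma incrementMGF_zero (hr : ∀ n, 0 < r n) (hN : 1 ≤ N) : incrementMGF r N 0 = 1 := by
  simp only [incrementMGF, zero_mul, exp_zero, mul_one]
  exact inv_mul_cancel₀ (RR_pos hr hN).ne'

lemma sum_exp_mul_tauP {M : ℕ} (hM : k * N ≤ M) (t : ℝ) :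
    ∑ j ∈ range (M + 1), exp (t * j) * tauP r N k j = incrementMGF r N t ^ k := by
  simp_rw [tauP_eq, incrementMGF, mul_pow, ← sum_range_sum_piFinset_filter_eq_pow _ hM, mul_sum]
  refine sum_congr rfl fun j _ => sum_congr rfl fun f hf => ?_
  rw [mul_left_comm, prod_mul_distrib, ← exp_sum, (mem_filter.mp hf).2.symm]
  push_cast
  rw [mul_sum]
  ring_nf

lemma tauCdf_le_exp_mul_incrementMGF_pow (hr : ∀ n, 0 ≤ r n) {l : ℝ} (hl : 0 ≤ l) :
    tauCdf r N k n ≤ exp (l * n) * incrementMGF r N (-l) ^ k := by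
  rw [← sum_exp_mul_tauP (M := k * N + n) le_self_add, mul_sum]
  calc tauCdf r N k n ≤ ∑ j ∈ range (n + 1), exp (l * n) * (exp (-l * j) * tauP r N k j) := by
        refine sum_le_sum fun j hj => ?_
        have hjn : (j : ℝ) ≤ n := by exact_mod_cast Nat.lt_succ_iff.mp (mem_range.mp hj)
        rw [← mul_assoc, ← exp_add]
        refine le_mul_of_one_le_left (tauP_nonneg hr N k j) (one_le_exp ?_)
        nlinarith
    _ ≤ _ := sum_le_sum_of_subset_of_nonneg (range_subset_range.mpr (by omega))
        fun j _ _ => by have := tauP_nonneg hr N k j; positivity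

lemma tauCdf_le_one (hr : ∀ n, 0 < r n) (hN : 1 ≤ N) : tauCdf r N k n ≤ 1 := by
  simpa [incrementMGF_zero hr hN] using
    tauCdf_le_exp_mul_incrementMGF_pow (N := N) (k := k) (n := n) (fun n => (hr n).le) le_rfl

lemma tauCdf_eq_zero_of_lt (hn : n < k) : tauCdf r N k n = 0 := by
  refine sum_eq_zero fun j hj => ?_
  rw [tauP_eq, filter_eq_empty_iff.mpr, sum_empty, mul_zero]
  intro f hf
  have : ∑ _i : Fin k, 1 ≤ ∑ i, f i :=
    sum_le_sum fun i _ => (mem_Icc.mp (Fintype.mem_piFinset.mp hf i)).1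
  simp only [sum_const, card_univ, Fintype.card_fin, smul_eq_mul, mul_one] at this
  have := mem_range.mp hj
  omega

variable {c₀ C : ℝ}

lemma RR_le_mul_log_add_one (hr : ∀ n, 0 < r n) (hup : ∀ j, 1 ≤ j → j * r j ≤ C) (N : ℕ) :
    RR r N ≤ C * (log N + 1) := by
  have hC : 0 ≤ C := by simpa using (hr 1).le.trans (by simpa using hup 1 le_rfl)
  calc RR r N ≤ ∑ j ∈ Icc 1 N, C * (j : ℝ)⁻¹ := sum_le_sum fun j hj => by
        have hj0 : (0 : ℝ) < j := by exact_mod_cast (mem_Icc.mp hj).1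
        rw [← div_eq_mul_inv, le_div_iff₀ hj0, mul_comm]
        exact hup j (mem_Icc.mp hj).1
    _ ≤ C * (log N + 1) := by
        rw [← mul_sum, add_comm]
        exact mul_le_mul_of_nonneg_left (sum_Icc_inv_le_one_add_log N) hC

lemma div_RR_le_one_sub_incrementMGF (hr : ∀ n, 0 < r n) (hc₀ : 0 ≤ c₀)
    (hlow : ∀ j, 1 ≤ j → c₀ ≤ j * r j) {J : ℕ} (hJ : 1 ≤ J) (hJN : J ≤ N) {l : ℝ}
    (hl : 1 ≤ l * J) :
    (1 - exp (-1)) * c₀ * log ((N + 1) / J) / RR r N ≤ 1 - incrementMGF r N (-l) := by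
  have hR := RR_pos hr (hJ.trans hJN)
  have hl0 : 0 ≤ l := nonneg_of_mul_nonneg_left (by linarith) (by positivity : (0 : ℝ) < J)
  have hterm : ∀ j ∈ Icc 1 N, 0 ≤ r j * (1 - exp (-l * j)) := fun j _ =>
    mul_nonneg (hr j).le
      (sub_nonneg.mpr (exp_le_one_iff.mpr (by nlinarith [j.cast_nonneg (α := ℝ)])))
  have hsum : 1 - incrementMGF r N (-l) =
      (RR r N)⁻¹ * ∑ j ∈ Icc 1 N, r j * (1 - exp (-l * j)) := by
    have hRR : ∑ j ∈ Icc 1 N, r j = RR r N := rfl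
    simp only [incrementMGF, mul_sub, mul_one, sum_sub_distrib, hRR, inv_mul_cancel₀ hR.ne']
  rw [hsum, div_eq_inv_mul]
  refine mul_le_mul_of_nonneg_left ?_ (inv_nonneg.mpr hR.le)
  calc (1 - exp (-1)) * c₀ * log ((N + 1) / J)
      ≤ (1 - exp (-1)) * c₀ * ∑ j ∈ Icc J N, (j : ℝ)⁻¹ :=
        mul_le_mul_of_nonneg_left (log_div_le_sum_Icc_inv hJ (by omega))
          (mul_nonneg (sub_nonneg.mpr (exp_le_one_iff.mpr (by norm_num))) hc₀)
    _ ≤ ∑ j ∈ Icc J N, r j * (1 - exp (-l * j)) := by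
        rw [mul_sum]
        refine sum_le_sum fun j hj => ?_
        have hj1 : 1 ≤ j := hJ.trans (mem_Icc.mp hj).1
        have hj0 : (0 : ℝ) < j := by exact_mod_cast hj1
        have hlj : 1 ≤ l * j := hl.trans (by gcongr; exact_mod_cast (mem_Icc.mp hj).1)
        calc (1 - exp (-1)) * c₀ * (j : ℝ)⁻¹ = (1 - exp (-1)) * (c₀ / j) := by ring
          _ ≤ (1 - exp (-l * j)) * r j := by
            refine mul_le_mul (by gcongr; linarith) ?_ (div_nonneg hc₀ hj0.le)
              (sub_nonneg.mpr (exp_le_one_iff.mpr (by linarith)))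
            rw [div_le_iff₀ hj0, mul_comm]
            exact hlow j hj1
          _ = r j * (1 - exp (-l * j)) := mul_comm _ _
    _ ≤ ∑ j ∈ Icc 1 N, r j * (1 - exp (-l * j)) :=
        sum_le_sum_of_subset_of_nonneg (Icc_subset_Icc hJ le_rfl) fun j hj _ => hterm j hj

lemma tauCdf_le_exp_of_bounds (hr : ∀ n, 0 < r n) (hc₀ : 0 ≤ c₀)
    (hlow : ∀ j, 1 ≤ j → c₀ ≤ j * r j) (hup : ∀ j, 1 ≤ j → j * r j ≤ C)
    {J : ℕ} (hJ : 1 ≤ J) (hJN : J ≤ N) :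
    tauCdf r N k n ≤
      exp (n / J - k * ((1 - exp (-1)) * c₀ / C * log ((N + 1) / J) / (log N + 1))) := by
  have hJ0 : (0 : ℝ) < J := by exact_mod_cast hJ
  set q := incrementMGF r N (-(J : ℝ)⁻¹)
  have hq : 0 ≤ q := mul_nonneg (inv_nonneg.mpr (RR_pos hr (hJ.trans hJN)).le)
    (sum_nonneg fun j _ => mul_nonneg (hr j).le (exp_pos _).le)
  have hlog : 0 ≤ (1 - exp (-1)) * c₀ * log ((N + 1) / J) :=
    mul_nonneg (mul_nonneg (sub_nonneg.mpr (exp_le_one_iff.mpr (by norm_num))) hc₀)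
      (log_nonneg (by rw [le_div_iff₀ hJ0, one_mul]; exact_mod_cast (by omega : J ≤ N + 1)))
  have hgap : (1 - exp (-1)) * c₀ / C * log ((N + 1) / J) / (log N + 1) ≤ 1 - q :=
    calc _ = (1 - exp (-1)) * c₀ * log ((N + 1) / J) / (C * (log N + 1)) := by
          rw [div_mul_eq_mul_div, div_div]
      _ ≤ (1 - exp (-1)) * c₀ * log ((N + 1) / J) / RR r N :=
          div_le_div_of_nonneg_left hlog (RR_pos hr (hJ.trans hJN))
            (RR_le_mul_log_add_one hr hup N)
      _ ≤ 1 - q := div_RR_le_one_sub_incrementMGF hr hc₀ hlow hJ hJN (by field_simp; rfl)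
  calc tauCdf r N k n ≤ exp ((J : ℝ)⁻¹ * n) * q ^ k :=
        tauCdf_le_exp_mul_incrementMGF_pow (fun n => (hr n).le) (by positivity)
    _ ≤ exp ((J : ℝ)⁻¹ * n) * exp (q - 1) ^ k := by
        gcongr
        linarith [add_one_le_exp (q - 1)]
    _ = exp (n / J - k * (1 - q)) := by
        rw [← exp_nat_mul, ← exp_add]
        ring_nf
    _ ≤ _ := by gcongr

end Renewal

lemma one_sub_log_le_four_mul_log_div_ceil {m : ℕ} {u : ℝ} (hum : 1 ≤ u * m) (hu : u < 1) :
    1 - log u ≤ 4 * log ((m + 1) / ⌈u * m / (2 * exp 1)⌉₊) := by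
  have hu0 : 0 < u := pos_of_mul_pos_left (by linarith) m.cast_nonneg
  have hm : (1 : ℝ) < m := by nlinarith
  have hlogu : log u < 0 := log_neg hu0 hu
  set x := u * m / (2 * exp 1)
  have hx0 : 0 < x := by positivity
  rcases le_or_gt 2⁻¹ x with hx | hx
  · have hJ0 : (0 : ℝ) < ⌈x⌉₊ := by exact_mod_cast Nat.ceil_pos.mpr hx0
    have hmx : 1 - log u = log (m / (2 * x)) := by
      rw [show (m : ℝ) / (2 * x) = exp 1 / u by simp only [x]; field_simp,
        log_div (exp_pos 1).ne' hu0.ne', log_exp]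
    have : 1 - log u ≤ log ((m + 1) / ⌈x⌉₊) := by
      rw [hmx]
      exact log_le_log (by positivity) (div_le_div₀ (by positivity) (by linarith) hJ0
        (Nat.ceil_le_two_mul hx))
    linarith
  · have hJ : ⌈x⌉₊ = 1 := le_antisymm (Nat.ceil_le.mpr (by push_cast; linarith))
      (Nat.one_le_ceil_iff.mpr hx0)
    rw [hJ, Nat.cast_one, div_one]
    have hinv : -log u ≤ log (m + 1) := by
      rw [← log_inv]
      exact log_le_log (by positivity) (by rw [inv_le_iff_one_le_mul₀ hu0]; linarith)
    have hhalf : 1 / 2 ≤ log (m + 1) :=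
      (log_two_gt_d9.le.trans' (by norm_num)).trans (log_le_log (by norm_num) (by linarith))
    linarith

lemma tauCdf_le_rpow_of_lt_one {r : ℕ → ℝ} {c₀ C c : ℝ} (hr : ∀ n, 0 < r n) (hc₀ : 0 ≤ c₀)
    (hlow : ∀ j, 1 ≤ j → c₀ ≤ j * r j) (hup : ∀ j, 1 ≤ j → j * r j ≤ C) (hc : 0 < c)
    (hc1 : c ≤ 1) (hcκ : 8 * exp 1 * c ≤ (1 - exp (-1)) * c₀ / C) {m k n : ℕ} (hm : 1 ≤ m)
    (hk : 1 ≤ k) (hkn : k ≤ n) (hu : n * (log m + 1) / (c * k * m) < 1) :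
    tauCdf r m k n ≤ (n * (log m + 1) / (c * k * m)) ^ (c * k / (log m + 1)) := by
  set L := log m + 1
  set u := n * L / (c * k * m)
  have hL : 1 ≤ L := le_add_of_nonneg_left (log_nonneg (by exact_mod_cast hm))
  have hmR : (0 : ℝ) < m := by exact_mod_cast hm
  have hkR : (0 : ℝ) < k := by exact_mod_cast hk
  have hknR : (k : ℝ) ≤ n := by exact_mod_cast hkn
  have hum_eq : u * m = n * L / (c * k) := by simp only [u]; field_simp
  have hum : 1 ≤ u * m := by
    rw [hum_eq, le_div_iff₀ (by positivity), one_mul]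
    nlinarith
  have hu0 : 0 < u := pos_of_mul_pos_left (by linarith) hmR.le
  set J := ⌈u * m / (2 * exp 1)⌉₊
  have hJ : 1 ≤ J := Nat.one_le_ceil_iff.mpr (div_pos (by linarith) (by positivity))
  have hJm : J ≤ m := Nat.ceil_le.mpr (by
    rw [div_le_iff₀ (by positivity)]
    nlinarith [add_one_le_exp (1 : ℝ)])
  have hnJ : n / J ≤ 2 * exp 1 * c * k / L := by
    have hJ0 : (0 : ℝ) < J := by exact_mod_cast hJ
    have hceil : u * m / (2 * exp 1) ≤ J := Nat.le_ceil _
    rw [hum_eq, div_div, div_le_iff₀ (by positivity)] at hceil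
    rw [div_le_div_iff₀ hJ0 (by positivity)]
    linarith
  have hX := one_sub_log_le_four_mul_log_div_ceil hum hu
  rw [rpow_def_of_pos hu0]
  refine (tauCdf_le_exp_of_bounds hr hc₀ hlow hup hJ hJm).trans (exp_le_exp.mpr ?_)
  set κ := (1 - exp (-1)) * c₀ / C
  set X := log ((m + 1) / J)
  have hlogu : log u < 0 := log_neg hu0 hu
  have hnum : 2 * exp 1 * c * k - k * κ * X ≤ c * k * log u := by
    have h1 : 0 ≤ k * (κ - 8 * exp 1 * c) * X :=
      mul_nonneg (mul_nonneg hkR.le (by linarith)) (by linarith)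
    have h2 : 0 ≤ 2 * exp 1 * c * k * (4 * X - (1 - log u)) :=
      mul_nonneg (by positivity) (by linarith)
    have h3 : 0 ≤ (2 * exp 1 - 1) * (c * k) * -log u :=
      mul_nonneg (mul_nonneg (by linarith [add_one_le_exp (1 : ℝ)]) (by positivity))
        (by linarith)
    linarith
  calc n / J - k * (κ * X / L) ≤ (2 * exp 1 * c * k - k * κ * X) / L := by
        rw [sub_div, show k * (κ * X / L) = k * κ * X / L by ring]
        linarith
    _ ≤ c * k * log u / L := div_le_div_of_nonneg_right hnum (by linarith)
    _ = log u * (c * k / L) := by ring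

/-- Lemma 6.5 (lower tail estimate): there is `c ∈ (0,1)` with
`P(τ_k^{(m)} ≤ n) ≤ (min(n(log m + 1)/(ckm), 1))^{ck/(log m + 1)}` for all `m, n, k ∈ ℕ`. -/
theorem lower_tail_estimate
    (a : ℝ) (ha : 0 < a) (r : ℕ → ℝ) (hr : ∀ n, 0 < r n)
    (hra : Tendsto (fun n : ℕ => (n : ℝ) * r n) atTop (nhds a)) :
    ∃ c : ℝ, c ∈ Set.Ioo (0:ℝ) 1 ∧ ∀ m n k : ℕ, 1 ≤ m → 1 ≤ n → 1 ≤ k →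
      tauCdf r m k n ≤
        (min ((n : ℝ) * (Real.log m + 1) / (c * k * m)) 1) ^
          (c * k / (Real.log m + 1)) := by
  obtain ⟨c₀, C, hc₀, hc₀C, hbounds⟩ := exists_bounds_natCast_mul_of_tendsto hr ha hra
  have hC : 0 < C := hc₀.trans_le hc₀C
  have hκ : 0 < (1 - exp (-1)) * c₀ / C :=
    div_pos (mul_pos (sub_pos.mpr (exp_lt_one_iff.mpr (by norm_num))) hc₀) hC
  have hκ1 : (1 - exp (-1)) * c₀ / C ≤ 1 := by
    rw [div_le_one hC]
    nlinarith [exp_pos (-1)]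
  set c := (1 - exp (-1)) * c₀ / C / (8 * exp 1)
  have hc : 0 < c := by positivity
  have hc1 : c < 1 := (div_lt_one (by positivity)).mpr
    (hκ1.trans_lt (by nlinarith [add_one_le_exp (1 : ℝ)]))
  refine ⟨c, ⟨hc, hc1⟩, fun m n k hm _ hk => ?_⟩
  rcases lt_or_ge n k with hnk | hkn
  · rw [tauCdf_eq_zero_of_lt hnk]
    exact rpow_nonneg (le_min (by positivity) zero_le_one) _
  rcases le_or_gt 1 ((n : ℝ) * (log m + 1) / (c * k * m)) with hu | hu
  · rw [min_eq_right hu, one_rpow]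
    exact tauCdf_le_one hr hm
  · rw [min_eq_left hu.le]
    exact tauCdf_le_rpow_of_lt_one hr hc₀.le (fun j hj => (hbounds j hj).1)
      (fun j hj => (hbounds j hj).2) hc hc1.le (mul_div_cancel₀ _ (by positivity)).le hm hk hkn hu
end
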